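/- Theorem 1 (descent in the large-gradient regime): if f : ℝ^d → ℝ is β-smooth, L_max < 1/β, and the point x satisfies ‖∇f(x)‖ ≥ √(3 η_c β σ²), then after one SGD-PLRS step x' = x − (η_c + u) g one has E[f(x')] − f(x) ≤ −β η_c² σ² / 3. -/

import Mathlib

/-!
Along the step `x - η • g`, `β`-smoothness gives
`f (x - η • g) ≤ f x - η ⟪∇f x, g⟫ + β / 2 η² ‖g‖²`. Taking expectations and using the
independence of `η` and `g`, the linear term becomes `-E[η] ‖∇f x‖² = -ηc ‖∇f x‖²`, while the
quadratic one is at most `β / 2 E[η²] (‖∇f x‖² + σ²)` with `E[η²] ≤ 4 ηc² / 3` for the uniform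
step. Since `β ηc ≤ 1` and `‖∇f x‖² ≥ 3 ηc β σ²`, the linear term wins by `β ηc² σ² / 3`.
-/

open MeasureTheory ProbabilityTheory RealInnerProductSpace Set

section Smooth

variable {E : Type*} [NormedAddCommGroup E] [InnerProductSpace ℝ E] [CompleteSpace E]
  {f : E → ℝ} {β : ℝ}

theorem abs_sub_sub_inner_gradient_le (hf : Differentiable ℝ f)
    (hsmooth : ∀ a b, ‖gradient f a - gradient f b‖ ≤ β * ‖a - b‖) (x y : E) :
    |f y - f x - ⟪gradient f x, y - x⟫| ≤ β / 2 * ‖y - x‖ ^ 2 := by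
  set v := y - x
  set G := gradient f x
  have hderiv : ∀ t : ℝ, HasDerivAt (fun s : ℝ => f (x + s • v) - f x - s * ⟪G, v⟫)
      ⟪gradient f (x + t • v) - G, v⟫ t := by
    intro t
    have hline : HasDerivAt (fun s : ℝ => x + s • v) v t := by
      simpa using ((hasDerivAt_id t).smul_const v).const_add x
    have hcomp := (hf (x + t • v)).hasGradientAt.hasFDerivAt.comp_hasDerivAt t hline
    rw [InnerProductSpace.toDual_apply_apply] at hcomp
    rw [inner_sub_left]
    have := (hcomp.sub_const (f x)).sub ((hasDerivAt_id' t).mul_const ⟪G, v⟫)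
    rwa [one_mul] at this
  have hbound : ∀ t ∈ Ico (0 : ℝ) 1, ‖⟪gradient f (x + t • v) - G, v⟫‖ ≤ β * t * ‖v‖ ^ 2 := by
    intro t ht
    calc ‖⟪gradient f (x + t • v) - G, v⟫‖ ≤ ‖gradient f (x + t • v) - G‖ * ‖v‖ :=
          norm_inner_le_norm _ _
      _ ≤ β * ‖(x + t • v) - x‖ * ‖v‖ := by gcongr; exact hsmooth _ _
      _ = β * t * ‖v‖ ^ 2 := by
          rw [add_sub_cancel_left, norm_smul, Real.norm_of_nonneg ht.1]; ring
  have hB : ∀ t : ℝ, HasDerivAt (fun s : ℝ => β / 2 * s ^ 2 * ‖v‖ ^ 2) (β * t * ‖v‖ ^ 2) t := by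
    intro t
    have := ((hasDerivAt_pow 2 t).const_mul (β / 2)).mul_const (‖v‖ ^ 2)
    exact this.congr_deriv (by push_cast; ring)
  have key := image_norm_le_of_norm_deriv_right_le_deriv_boundary
    (fun t _ => (hderiv t).continuousAt.continuousWithinAt)
    (fun t _ => (hderiv t).hasDerivWithinAt) (by simp) hB hbound (right_mem_Icc.2 zero_le_one)
  simpa [v] using key

end Smooth

namespace MeasureTheory.pdf.IsUniform

variable {Ω : Type*} [MeasurableSpace Ω] {μ : Measure Ω} {X : Ω → ℝ} {a b : ℝ}

theorem integrable_comp_of_Icc (hab : a < b) (hX : IsUniform X (Icc a b) μ) {φ : ℝ → ℝ}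
    (hφ : Continuous φ) : Integrable (fun ω => φ (X ω)) μ := by
  have hvol : volume (Icc a b) ≠ 0 := by simp [hab]
  refine (integrable_map_measure hφ.aestronglyMeasurable
    (hX.aemeasurable hvol measure_Icc_lt_top.ne)).1 ?_
  rw [hX]
  exact (hφ.integrableOn_Icc).smul_measure (ENNReal.inv_ne_top.2 hvol)

theorem integral_comp_of_Icc (hab : a < b) (hX : IsUniform X (Icc a b) μ) {φ : ℝ → ℝ}
    (hφ : Continuous φ) : ∫ ω, φ (X ω) ∂μ = (b - a)⁻¹ * ∫ t in a..b, φ t := by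
  have hvol : volume (Icc a b) ≠ 0 := by simp [hab]
  rw [← integral_map (hX.aemeasurable hvol measure_Icc_lt_top.ne) hφ.aestronglyMeasurable, hX,
    ProbabilityTheory.cond, integral_smul_measure, Real.volume_Icc,
    ENNReal.toReal_inv, ENNReal.toReal_ofReal (sub_nonneg.2 hab.le),
    intervalIntegral.integral_of_le hab.le, integral_Icc_eq_integral_Ioc, smul_eq_mul]

theorem integral_add_of_Icc (hab : a < b) (hX : IsUniform X (Icc a b) μ) (c : ℝ) :
    ∫ ω, (c + X ω) ∂μ = c + (a + b) / 2 := by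
  rw [integral_comp_of_Icc hab hX (continuous_const_add c),
    intervalIntegral.integral_comp_add_left (fun t => t), integral_id]
  field_simp [(sub_pos.2 hab).ne']
  ring

theorem integral_add_sq_of_Icc (hab : a < b) (hX : IsUniform X (Icc a b) μ) (c : ℝ) :
    ∫ ω, (c + X ω) ^ 2 ∂μ = ((c + a) ^ 2 + (c + a) * (c + b) + (c + b) ^ 2) / 3 := by
  rw [integral_comp_of_Icc hab hX (φ := fun t => (c + t) ^ 2) (by fun_prop),
    intervalIntegral.integral_comp_add_left (fun t => t ^ 2), integral_pow]
  field_simp [(sub_pos.2 hab).ne']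
  ring

end MeasureTheory.pdf.IsUniform

section Probability

variable {Ω E : Type*} [MeasurableSpace Ω] {μ : Measure Ω} [IsProbabilityMeasure μ]
  [NormedAddCommGroup E] [InnerProductSpace ℝ E] [CompleteSpace E] {g : Ω → E}

theorem integral_norm_sq_eq_norm_integral_sq_add (hg : Integrable g μ)
    (hg2 : Integrable (fun ω => ‖g ω‖ ^ 2) μ) :
    ∫ ω, ‖g ω‖ ^ 2 ∂μ = ‖∫ ω, g ω ∂μ‖ ^ 2 + ∫ ω, ‖g ω - ∫ ω, g ω ∂μ‖ ^ 2 ∂μ := by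
  set m := ∫ ω, g ω ∂μ
  have hinner : Integrable (fun ω => 2 * ⟪m, g ω⟫) μ := (hg.const_inner m).const_mul 2
  have hexpand : (fun ω => ‖g ω - m‖ ^ 2) = fun ω => ‖g ω‖ ^ 2 - 2 * ⟪m, g ω⟫ + ‖m‖ ^ 2 := by
    funext ω
    rw [norm_sub_sq_real, real_inner_comm]
  rw [hexpand, integral_add (hg2.sub' hinner) (integrable_const _), integral_sub hg2 hinner,
    integral_const_mul, integral_inner hg, real_inner_self_eq_norm_sq, integral_const,
    probReal_univ, one_smul]
  ring

theorem integral_comp_sub_smul_le [MeasurableSpace E] [OpensMeasurableSpace E]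
    {f : E → ℝ} {β : ℝ} {η : Ω → ℝ} (hf : Differentiable ℝ f)
    (hsmooth : ∀ a b, ‖gradient f a - gradient f b‖ ≤ β * ‖a - b‖) (x : E)
    (hη : Integrable η μ) (hη2 : Integrable (fun ω => η ω ^ 2) μ)
    (hg : Integrable g μ) (hg2 : Integrable (fun ω => ‖g ω‖ ^ 2) μ) (hindep : IndepFun η g μ) :
    ∫ ω, f (x - η ω • g ω) ∂μ ≤ f x - (∫ ω, η ω ∂μ) * ⟪gradient f x, ∫ ω, g ω ∂μ⟫
      + β / 2 * ((∫ ω, η ω ^ 2 ∂μ) * ∫ ω, ‖g ω‖ ^ 2 ∂μ) := by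
  set G := gradient f x
  have hindep_inner : IndepFun η (fun ω => ⟪G, g ω⟫) μ :=
    hindep.comp measurable_id (continuous_const.inner continuous_id).measurable
  have hindep_sq : IndepFun (fun ω => η ω ^ 2) (fun ω => ‖g ω‖ ^ 2) μ :=
    hindep.comp (measurable_id.pow_const 2) (continuous_norm.pow 2).measurable
  have hlin : Integrable (fun ω => η ω * ⟪G, g ω⟫) μ :=
    hindep_inner.integrable_mul hη (hg.const_inner G)
  have hquad : Integrable (fun ω => β / 2 * (η ω ^ 2 * ‖g ω‖ ^ 2)) μ :=
    (hindep_sq.integrable_mul hη2 hg2).const_mul _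
  have htaylor : ∀ ω, |f (x - η ω • g ω) - (f x - η ω * ⟪G, g ω⟫)|
      ≤ β / 2 * (η ω ^ 2 * ‖g ω‖ ^ 2) := by
    intro ω
    have h := abs_sub_sub_inner_gradient_le hf hsmooth x (x - η ω • g ω)
    rw [sub_sub_cancel_left, inner_neg_right, real_inner_smul_right, norm_neg, norm_smul,
      mul_pow, Real.norm_eq_abs, sq_abs] at h
    convert h using 2; ring
  have hmeas : AEStronglyMeasurable (fun ω => f (x - η ω • g ω)) μ :=
    hf.continuous.comp_aestronglyMeasurable
      (aestronglyMeasurable_const.sub (hη.aestronglyMeasurable.smul hg.aestronglyMeasurable))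
  have hrem : Integrable (fun ω => f (x - η ω • g ω) - (f x - η ω * ⟪G, g ω⟫)) μ :=
    hquad.mono' (hmeas.sub (aestronglyMeasurable_const.sub hlin.aestronglyMeasurable))
      (.of_forall htaylor)
  have hint : Integrable (fun ω => f (x - η ω • g ω)) μ := by
    simpa using hrem.fun_add ((integrable_const (f x)).sub' hlin)
  calc ∫ ω, f (x - η ω • g ω) ∂μ
      ≤ ∫ ω, (f x - η ω * ⟪G, g ω⟫ + β / 2 * (η ω ^ 2 * ‖g ω‖ ^ 2)) ∂μ :=
        integral_mono hint (((integrable_const _).sub' hlin).fun_add hquad)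
          fun ω => by linarith [(abs_le.1 (htaylor ω)).2]
    _ = _ := by
        rw [integral_add ((integrable_const _).sub' hlin) hquad,
          integral_sub (integrable_const _) hlin, integral_const, probReal_univ, one_smul,
          integral_const_mul,
          hindep_inner.integral_fun_mul_eq_mul_integral hη.aestronglyMeasurable
            (hg.const_inner G).aestronglyMeasurable,
          hindep_sq.integral_fun_mul_eq_mul_integral hη2.aestronglyMeasurable
            hg2.aestronglyMeasurable, integral_inner hg]

end Probability

theorem sgd_plrs_large_gradient_descent_general
    {Ω : Type} [MeasurableSpace Ω] (μ : Measure Ω) [IsProbabilityMeasure μ]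
    {d : ℕ} (f : EuclideanSpace ℝ (Fin d) → ℝ) (β σ : ℝ) (hβ : 0 < β)
    (hdiff : Differentiable ℝ f)
    (hsmooth : ∀ a b : EuclideanSpace ℝ (Fin d),
      ‖gradient f a - gradient f b‖ ≤ β * ‖a - b‖)
    (x : EuclideanSpace ℝ (Fin d))
    (Lmin Lmax ηc : ℝ)
    (hLmin : 0 < Lmin) (hLL : Lmin < Lmax)
    (hLβ : Lmax < 1 / β)
    (hηc : ηc = (Lmin + Lmax) / 2)
    (u : Ω → ℝ) (g : Ω → EuclideanSpace ℝ (Fin d))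
    (hu : pdf.IsUniform u (Set.Icc (Lmin - ηc) (Lmax - ηc)) μ volume)
    (hindep : IndepFun u g μ)
    (hg_int : Integrable g μ)
    (hg2_int : Integrable (fun ω => ‖g ω‖ ^ 2) μ)
    (hg_mean : ∫ ω, g ω ∂μ = gradient f x)
    (hσ : ∫ ω, ‖g ω - gradient f x‖ ^ 2 ∂μ ≤ σ ^ 2)
    (hgrad_large : Real.sqrt (3 * ηc * β * σ ^ 2) ≤ ‖gradient f x‖)
    (x' : Ω → EuclideanSpace ℝ (Fin d))
    (hx' : ∀ ω, x' ω = x - (ηc + u ω) • g ω) :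
    ∫ ω, f (x' ω) ∂μ - f x ≤ -(β * ηc ^ 2 * σ ^ 2 / 3) := by
  have hab : Lmin - ηc < Lmax - ηc := by linarith
  have hηc_pos : 0 < ηc := by linarith
  have hmean : ∫ ω, (ηc + u ω) ∂μ = ηc := by rw [hu.integral_add_of_Icc hab, hηc]; ring
  -- the second moment of the step size is `ηc² + (Lmax - Lmin)² / 12`
  have hsecond : ∫ ω, (ηc + u ω) ^ 2 ∂μ ≤ 4 / 3 * ηc ^ 2 := by
    rw [hu.integral_add_sq_of_Icc hab, add_sub_cancel, add_sub_cancel, hηc]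
    nlinarith
  have hvar : ∫ ω, ‖g ω‖ ^ 2 ∂μ ≤ ‖gradient f x‖ ^ 2 + σ ^ 2 := by
    rw [integral_norm_sq_eq_norm_integral_sq_add hg_int hg2_int, hg_mean]; linarith
  have hstep := integral_comp_sub_smul_le hdiff hsmooth x
    (hu.integrable_comp_of_Icc hab (continuous_const_add ηc))
    (hu.integrable_comp_of_Icc hab (φ := fun t => (ηc + t) ^ 2) (by fun_prop)) hg_int hg2_int
    (hindep.comp (measurable_const_add ηc) measurable_id)
  rw [hmean, hg_mean, real_inner_self_eq_norm_sq] at hstep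
  have hK : 3 * ηc * β * σ ^ 2 ≤ ‖gradient f x‖ ^ 2 :=
    (Real.sqrt_le_left (norm_nonneg _)).1 hgrad_large
  have hβηc : β * ηc ≤ 1 := by rw [lt_div_iff₀ hβ] at hLβ; nlinarith
  simp_rw [hx']
  set K := ‖gradient f x‖ ^ 2
  calc ∫ ω, f (x - (ηc + u ω) • g ω) ∂μ - f x
      ≤ -(ηc * K) + β / 2 * (4 / 3 * ηc ^ 2 * (K + σ ^ 2)) := by
        nlinarith [mul_le_mul hsecond hvar (integral_nonneg fun ω => sq_nonneg ‖g ω‖)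
          (by positivity)]
    _ ≤ -(β * ηc ^ 2 * σ ^ 2 / 3) := by
        have hK0 : 0 ≤ ηc * K := by positivity
        nlinarith [mul_le_mul_of_nonneg_right hβηc hK0, mul_le_mul_of_nonneg_left hK hηc_pos.le]

/-- **Theorem 1 (descent in the large-gradient regime).** If `f` is `β`-smooth,
`Lmax < 1/β`, and `‖∇f(x)‖ ≥ √(3 ηc β σ²)`, then after one SGD-PLRS step
`x' = x - (ηc + u) • g` one has `E[f(x')] - f(x) ≤ -β ηc² σ² / 3`. -/
theorem sgd_plrs_large_gradient_descent
    {Ω : Type} [MeasurableSpace Ω] (μ : Measure Ω) [IsProbabilityMeasure μ]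
    {d : ℕ} (f : EuclideanSpace ℝ (Fin d) → ℝ) (β σ : ℝ) (hβ : 0 < β)
    (hdiff : Differentiable ℝ f)
    (hsmooth : ∀ a b : EuclideanSpace ℝ (Fin d),
      ‖gradient f a - gradient f b‖ ≤ β * ‖a - b‖)
    (x : EuclideanSpace ℝ (Fin d))
    (Lmin Lmax ηc : ℝ)
    (hLmin : 0 < Lmin) (hLL : Lmin < Lmax) (hLmax : Lmax < 1)
    (hLβ : Lmax < 1 / β)
    (hηc : ηc = (Lmin + Lmax) / 2)
    (u : Ω → ℝ) (g : Ω → EuclideanSpace ℝ (Fin d))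
    (hu : pdf.IsUniform u (Set.Icc (Lmin - ηc) (Lmax - ηc)) μ volume)
    (hindep : IndepFun u g μ)
    (hg_int : Integrable g μ)
    (hg2_int : Integrable (fun ω => ‖g ω‖ ^ 2) μ)
    (hg_mean : ∫ ω, g ω ∂μ = gradient f x)
    (hσ : ∫ ω, ‖g ω - gradient f x‖ ^ 2 ∂μ ≤ σ ^ 2)
    (hgrad_large : Real.sqrt (3 * ηc * β * σ ^ 2) ≤ ‖gradient f x‖)
    (x' : Ω → EuclideanSpace ℝ (Fin d))
    (hx' : ∀ ω, x' ω = x - (ηc + u ω) • g ω) :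
    ∫ ω, f (x' ω) ∂μ - f x ≤ -(β * ηc ^ 2 * σ ^ 2 / 3) :=
  sgd_plrs_large_gradient_descent_general μ f β σ hβ hdiff hsmooth x Lmin Lmax ηc hLmin hLL hLβ hηc
    u g hu hindep hg_int hg2_int hg_mean hσ hgrad_large x' hx'
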